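/- The bracket on triples (S, A, B) with S ∈ Sym(2K), A ∈ ℝ^{2K}, B ∈ ℝ given by [(S,A,B),(S',A',B')] = (S N̄ S' − S' N̄ S, S N̄ A' − S' N̄ A, (1/4)(Aᵀ N̄ A' − A'ᵀ N̄ A)) satisfies the Jacobi identity. -/
import Mathlib

open Matrix

/-- The bracket on triples `(S, A, B) ∈ Sym(2K) × ℝ^{2K} × ℝ`. -/
noncomputable def tripleBracket {K : ℕ} (Nbar : Matrix (Fin (2 * K)) (Fin (2 * K)) ℝ)
    (x y : Matrix (Fin (2 * K)) (Fin (2 * K)) ℝ × (Fin (2 * K) → ℝ) × ℝ) :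
    Matrix (Fin (2 * K)) (Fin (2 * K)) ℝ × (Fin (2 * K) → ℝ) × ℝ :=
  ( x.1 * Nbar * y.1 - y.1 * Nbar * x.1,
    (x.1 * Nbar).mulVec y.2.1 - (y.1 * Nbar).mulVec x.2.1,
    (1 / 4) * (x.2.1 ⬝ᵥ Nbar.mulVec y.2.1 - y.2.1 ⬝ᵥ Nbar.mulVec x.2.1) )

lemma aux_dot {n : Type*} [Fintype n] (A : Matrix n n ℝ) (u w : n → ℝ) :
    (A *ᵥ u) ⬝ᵥ w = u ⬝ᵥ (Aᵀ *ᵥ w) := by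
  rw [dotProduct_mulVec, vecMul_transpose]

/-- The triple bracket satisfies the Jacobi identity. -/
theorem tripleBracket_jacobi {K : ℕ}
    (Nbar : Matrix (Fin (2 * K)) (Fin (2 * K)) ℝ) (hN : Nbarᵀ = -Nbar)
    (x y z : Matrix (Fin (2 * K)) (Fin (2 * K)) ℝ × (Fin (2 * K) → ℝ) × ℝ)
    (hx : x.1ᵀ = x.1) (hy : y.1ᵀ = y.1) (hz : z.1ᵀ = z.1) :
    tripleBracket Nbar (tripleBracket Nbar x y) z
      + tripleBracket Nbar (tripleBracket Nbar y z) x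
      + tripleBracket Nbar (tripleBracket Nbar z x) y = 0 := by
  obtain ⟨S1, A1, B1⟩ := x
  obtain ⟨S2, A2, B2⟩ := y
  obtain ⟨S3, A3, B3⟩ := z
  simp only at hx hy hz
  refine Prod.ext ?_ (Prod.ext ?_ ?_)
  · simp only [tripleBracket, Prod.fst_add, Prod.fst_zero]
    noncomm_ring
  · simp only [tripleBracket, Prod.snd_add, Prod.fst_add, Prod.snd_zero, Prod.fst_zero,
      sub_mulVec, mulVec_sub, mulVec_mulVec, sub_mul, mul_assoc]
    abel
  · simp only [tripleBracket, Prod.snd_add, Prod.snd_zero,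
      sub_mulVec, mulVec_sub, mulVec_mulVec, sub_dotProduct, dotProduct_sub, aux_dot,
      transpose_mul, hN, hx, hy, hz, Matrix.neg_mul, Matrix.mul_neg, mulVec_neg, neg_mulVec,
      dotProduct_neg, mul_assoc]
    ring
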